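/- Let B be a Ferrers board with n columns, padded with columns of height zero on the left so that ξ(B) = ⟨z_1,…,z_n⟩ has only non-negative entries. Let v_i be the number of entries of ξ(B) equal to i and M the greatest integer with v_M ≠ 0. If v_i > 1 implies v_{i+1} > 1 for all 0 ≤ i < M−1, then B is connected by a path of edges in the rook equivalence graph G(B) to a Ferrers board B′ whose root vector ξ(B′) has as its first M+1 entries the integers 0, 1, …, M−1, M in increasing order. -/

import Mathlib

/-- A (non-attacking) rook placement on the board with column heights `b`:
a set of cells (column, row) inside the board, no two sharing a column or a row.
Cells are 0-indexed: cell `(i, j)` lies in the board iff `j < b i`. -/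
def IsRookPlacement {n : ℕ} (b : Fin n → ℕ) (P : Finset (Fin n × ℕ)) : Prop :=
  (∀ c ∈ P, c.2 < b c.1) ∧
  ∀ c ∈ P, ∀ d ∈ P, c ≠ d → c.1 ≠ d.1 ∧ c.2 ≠ d.2

/-- The `k`-th rook number of the board `b`: the number of placements of `k`
non-attacking rooks on `b`. -/
noncomputable def rookNum {n : ℕ} (b : Fin n → ℕ) (k : ℕ) : ℕ :=
  Set.ncard {P : Finset (Fin n × ℕ) | IsRookPlacement b P ∧ P.card = k}

/-- Two boards are rook equivalent if all their rook numbers agree. -/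
def RookEquiv {n₁ n₂ : ℕ} (b₁ : Fin n₁ → ℕ) (b₂ : Fin n₂ → ℕ) : Prop :=
  ∀ k, rookNum b₁ k = rookNum b₂ k

/-- The root vector of a board: the (0-indexed) `i`-th entry is `i - b i`
(1-indexed: `(i-1) - b_i`). -/
def rootVec {n : ℕ} (b : Fin n → ℕ) : Fin n → ℤ := fun i => (i : ℤ) - (b i : ℤ)

/-- `b₁` is obtained from `b₂` by moving `k > 0` squares out of one column into a
single other column: the boards agree except in columns `i` and `j`, where `b₁`
has `k` more squares in column `i` and `k` fewer in column `j`. -/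
def MovesSquares {n : ℕ} (b₁ b₂ : Fin n → ℕ) : Prop :=
  ∃ (i j : Fin n) (k : ℕ), i ≠ j ∧ 0 < k ∧ b₁ i = b₂ i + k ∧ b₂ j = b₁ j + k ∧
    ∀ l, l ≠ i → l ≠ j → b₁ l = b₂ l

/-- A Ferrers board with `n` columns: a weakly increasing sequence of column heights. -/
def FerrersBoard (n : ℕ) : Type := {b : Fin n → ℕ // Monotone b}

/-- The rook equivalence graph of the equivalence class of `B`: vertices are the
Ferrers boards with `n` columns rook equivalent to `B`; two distinct boards are
adjacent when one is obtained from the other by moving squares out of one column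
into a single other column. -/
def rookEquivGraph {n : ℕ} (B : FerrersBoard n) :
    SimpleGraph {C : FerrersBoard n // RookEquiv C.1 B.1} :=
  SimpleGraph.fromRel fun C D => MovesSquares C.1.1 D.1.1

/-- `entryCount b k` is `v_k`, the number of entries of the root vector of `b`
equal to `k`. -/
def entryCount {n : ℕ} (b : Fin n → ℕ) (k : ℕ) : ℕ :=
  (Finset.univ.filter fun l => rootVec b l = (k : ℤ)).card

/-!
Ferrers boards whose root vectors agree up to order are rook equivalent: by the factorization
theorem of Goldman, Joichi and White, `∑ₖ rₖ(B) (x)ₙ₋ₖ = ∏ᵢ (x - ξᵢ)`, and the falling factorials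
are linearly independent. Exchanging the roots `ξ_p < ξ_q` of columns `p` and `q` moves
`ξ_q - ξ_p` squares from column `p` to column `q`, so it suffices to reach a root vector starting
with `0, 1, …, M` by such exchanges through Ferrers boards.

This goes by induction on the number of columns. If `0` is a simple root, it is the root of the
first column, and removing that column lowers every other root by one. Otherwise the hypothesis
makes every root below `M` repeated; this lets us exchange the root of the last column with
smaller ones until it is `0`, and then remove the last column.
-/

open Finset Polynomial

section RookPlacements

variable {n : ℕ}

lemma IsRookPlacement.mono {b : Fin n → ℕ} {P Q : Finset (Fin n × ℕ)} (hP : IsRookPlacement b P)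
    (hQ : Q ⊆ P) : IsRookPlacement b Q :=
  ⟨fun c hc => hP.1 c (hQ hc), fun c hc d hd hne => hP.2 c (hQ hc) d (hQ hd) hne⟩

lemma IsRookPlacement.card_image_fst {b : Fin n → ℕ} {P : Finset (Fin n × ℕ)}
    (hP : IsRookPlacement b P) : (P.image Prod.fst).card = P.card :=
  card_image_of_injOn fun c hc d hd hcd => by_contra fun hne => (hP.2 c hc d hd hne).1 hcd

lemma IsRookPlacement.card_image_snd {b : Fin n → ℕ} {P : Finset (Fin n × ℕ)}
    (hP : IsRookPlacement b P) : (P.image Prod.snd).card = P.card :=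
  card_image_of_injOn fun c hc d hd hcd => by_contra fun hne => (hP.2 c hc d hd hne).2 hcd

lemma isRookPlacement_insert_iff {b : Fin n → ℕ} {P : Finset (Fin n × ℕ)} {c : Fin n × ℕ}
    (hc : c ∉ P) :
    IsRookPlacement b (insert c P) ↔
      IsRookPlacement b P ∧ c.2 < b c.1 ∧ ∀ d ∈ P, d.1 ≠ c.1 ∧ d.2 ≠ c.2 := by
  refine ⟨fun h => ⟨h.mono (subset_insert c P), h.1 c (mem_insert_self c P),
    fun d hd => h.2 d (mem_insert_of_mem hd) c (mem_insert_self c P) (ne_of_mem_of_not_mem hd hc)⟩,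
    fun ⟨hP, hcb, hcP⟩ => ⟨?_, ?_⟩⟩
  · intro d hd
    rcases mem_insert.1 hd with rfl | hd
    exacts [hcb, hP.1 d hd]
  · intro d hd e he hne
    rcases mem_insert.1 hd with rfl | hdP <;> rcases mem_insert.1 he with rfl | heP
    · exact absurd rfl hne
    · exact (hcP e heP).imp Ne.symm Ne.symm
    · exact hcP d hdP
    · exact hP.2 d hdP e heP hne

open Classical in
noncomputable def placements (b : Fin n → ℕ) (k : ℕ) : Finset (Finset (Fin n × ℕ)) :=
  ((univ ×ˢ range (univ.sup b)).powerset).filter fun P => IsRookPlacement b P ∧ P.card = k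

open Classical in
lemma mem_placements {b : Fin n → ℕ} {k : ℕ} {P : Finset (Fin n × ℕ)} :
    P ∈ placements b k ↔ IsRookPlacement b P ∧ P.card = k := by
  rw [placements, mem_filter, mem_powerset, and_iff_right_iff_imp]
  intro h c hc
  exact mem_product.2 ⟨mem_univ _, mem_range.2 ((h.1.1 c hc).trans_le (le_sup (mem_univ _)))⟩

lemma rookNum_eq_card_placements (b : Fin n → ℕ) (k : ℕ) :
    rookNum b k = (placements b k).card := by
  rw [rookNum, ← Set.ncard_coe_finset]
  congr 1
  ext P
  simp [mem_placements]

lemma rookNum_zero (b : Fin n → ℕ) : rookNum b 0 = 1 := by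
  rw [rookNum_eq_card_placements, card_eq_one]
  refine ⟨∅, eq_singleton_iff_unique_mem.2 ⟨mem_placements.2 ⟨?_, rfl⟩, ?_⟩⟩
  · exact ⟨by simp, by simp⟩
  · exact fun P hP => card_eq_zero.1 (mem_placements.1 hP).2

lemma rookNum_eq_zero_of_lt (b : Fin n → ℕ) {k : ℕ} (hk : n < k) : rookNum b k = 0 := by
  rw [rookNum_eq_card_placements, card_eq_zero, eq_empty_iff_forall_notMem]
  intro P hP
  obtain ⟨hPb, rfl⟩ := mem_placements.1 hP
  have := hPb.card_image_fst ▸ (card_le_univ (P.image Prod.fst)).trans_eq (Fintype.card_fin n)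
  omega

end RookPlacements

section LastColumn

variable {n : ℕ}

/-- The cells of a board with `n` columns, seen as cells of the first `n` of `n + 1` columns. -/
def liftCell : Fin n × ℕ ↪ Fin (n + 1) × ℕ :=
  Fin.castSuccEmb.prodMap (Function.Embedding.refl ℕ)

@[simp] lemma liftCell_apply (c : Fin n × ℕ) : liftCell c = (c.1.castSucc, c.2) := rfl

lemma liftCell_fst_ne_last (c : Fin n × ℕ) : (liftCell c).1 ≠ Fin.last n :=
  Fin.castSucc_ne_last c.1

lemma isRookPlacement_map_liftCell_iff {b : Fin (n + 1) → ℕ} {P : Finset (Fin n × ℕ)} :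
    IsRookPlacement b (P.map liftCell) ↔ IsRookPlacement (b ∘ Fin.castSucc) P := by
  simp only [IsRookPlacement, forall_mem_map, liftCell_apply, Function.comp_apply, ne_eq,
    Prod.ext_iff, Fin.castSucc_inj]

lemma exists_map_liftCell_eq {P : Finset (Fin (n + 1) × ℕ)} (hP : ∀ c ∈ P, c.1 ≠ Fin.last n) :
    ∃ P' : Finset (Fin n × ℕ), P'.map liftCell = P := by
  classical
  have hrange : (P : Set (Fin (n + 1) × ℕ)) ⊆ liftCell '' Set.univ := fun c hc => by
    obtain ⟨i, hi⟩ := Fin.exists_castSucc_eq.2 (hP c hc)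
    exact ⟨(i, c.2), trivial, by simp [hi]⟩
  obtain ⟨P', -, hP'⟩ := subset_set_image_iff.1 hrange
  exact ⟨P', by rw [map_eq_image, hP']⟩


lemma insert_last_map_liftCell_inj {r₁ r₂ : ℕ} {P₁ P₂ : Finset (Fin n × ℕ)}
    (h : insert (Fin.last n, r₁) (P₁.map liftCell) = insert (Fin.last n, r₂) (P₂.map liftCell)) :
    r₁ = r₂ ∧ P₁ = P₂ := by
  have hlast (P : Finset (Fin n × ℕ)) (r : ℕ) :
      (insert (Fin.last n, r) (P.map liftCell)).filter (·.1 = Fin.last n) = {(Fin.last n, r)} := by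
    rw [filter_insert, if_pos rfl, filter_false_of_mem fun c hc => ?_]
    · rfl
    obtain ⟨c', -, rfl⟩ := mem_map.1 hc
    exact liftCell_fst_ne_last c'
  have hrest (P : Finset (Fin n × ℕ)) (r : ℕ) :
      (insert (Fin.last n, r) (P.map liftCell)).filter (·.1 ≠ Fin.last n) = P.map liftCell := by
    rw [filter_insert, if_neg (not_not_intro rfl), filter_true_of_mem fun c hc => ?_]
    obtain ⟨c', -, rfl⟩ := mem_map.1 hc
    exact liftCell_fst_ne_last c'
  refine ⟨?_, ?_⟩
  · simpa [hlast] using congrArg (·.filter (·.1 = Fin.last n)) h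
  · simpa [hrest] using congrArg (·.filter (·.1 ≠ Fin.last n)) h

variable (b : Fin (n + 1) → ℕ)

lemma card_placements_filter_not_mem_last (k : ℕ) :
    ((placements b k).filter fun P => ∀ c ∈ P, c.1 ≠ Fin.last n).card =
      rookNum (b ∘ Fin.castSucc) k := by
  rw [rookNum_eq_card_placements]
  symm
  refine card_bij (fun P' _ => P'.map liftCell) (fun P' hP' => ?_)
    (fun _ _ _ _ h => map_injective liftCell h) (fun P hP => ?_)
  · obtain ⟨hP'b, rfl⟩ := mem_placements.1 hP'
    refine mem_filter.2 ⟨mem_placements.2 ⟨isRookPlacement_map_liftCell_iff.2 hP'b, card_map _⟩,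
      forall_mem_map.2 fun c _ => liftCell_fst_ne_last c⟩
  · obtain ⟨hP, hlast⟩ := mem_filter.1 hP
    obtain ⟨hPb, rfl⟩ := mem_placements.1 hP
    obtain ⟨P', rfl⟩ := exists_map_liftCell_eq hlast
    exact ⟨P', mem_placements.2 ⟨isRookPlacement_map_liftCell_iff.1 hPb, (card_map _).symm⟩, rfl⟩

lemma card_placements_filter_mem_last (k : ℕ) :
    ((placements b (k + 1)).filter fun P => ¬ ∀ c ∈ P, c.1 ≠ Fin.last n).card =
      ∑ P' ∈ placements (b ∘ Fin.castSucc) k,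
        (range (b (Fin.last n)) \ P'.image Prod.snd).card := by
  rw [← card_sigma]
  symm
  refine card_bij (fun x _ => insert (Fin.last n, x.2) (x.1.map liftCell)) (fun x hx => ?_)
    (fun x _ y _ h => ?_) (fun P hP => ?_)
  · obtain ⟨hP', hr⟩ := mem_sigma.1 hx
    obtain ⟨hP'b, rfl⟩ := mem_placements.1 hP'
    obtain ⟨hrb, hr⟩ := mem_sdiff.1 hr
    have hnot : (Fin.last n, x.2) ∉ x.1.map liftCell := fun h => by
      obtain ⟨c, -, hc⟩ := mem_map.1 h
      exact liftCell_fst_ne_last c (congrArg Prod.fst hc)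
    refine mem_filter.2 ⟨mem_placements.2 ⟨(isRookPlacement_insert_iff hnot).2
      ⟨isRookPlacement_map_liftCell_iff.2 hP'b, mem_range.1 hrb, forall_mem_map.2 fun c hc =>
        ⟨liftCell_fst_ne_last c, fun h => hr (mem_image.2 ⟨c, hc, h⟩)⟩⟩, ?_⟩,
      fun h => h _ (mem_insert_self _ _) rfl⟩
    rw [card_insert_of_notMem hnot, card_map]
  · obtain ⟨hr, hP⟩ := insert_last_map_liftCell_inj h
    exact Sigma.ext hP (heq_of_eq hr)
  · obtain ⟨hP, hlast⟩ := mem_filter.1 hP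
    obtain ⟨hPb, hcard⟩ := mem_placements.1 hP
    simp only [not_forall, not_not] at hlast
    obtain ⟨⟨i, r⟩, hc, rfl : i = Fin.last n⟩ := hlast
    have hrest : ∀ c ∈ P.erase (Fin.last n, r), c.1 ≠ Fin.last n := fun c hc' =>
      (hPb.2 c (mem_of_mem_erase hc') _ hc (ne_of_mem_erase hc')).1
    obtain ⟨P', hP'⟩ := exists_map_liftCell_eq hrest
    rw [← insert_erase hc, ← hP'] at hPb
    have hnot : (Fin.last n, r) ∉ P'.map liftCell := hP' ▸ notMem_erase _ _
    obtain ⟨hP'b, hrb, hrow⟩ := (isRookPlacement_insert_iff hnot).1 hPb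
    refine ⟨⟨P', r⟩, mem_sigma.2 ⟨mem_placements.2 ⟨isRookPlacement_map_liftCell_iff.1 hP'b, ?_⟩,
      mem_sdiff.2 ⟨mem_range.2 hrb, fun h => ?_⟩⟩, by rw [hP', insert_erase hc]⟩
    · rw [← card_map liftCell, hP', card_erase_of_mem hc, hcard, Nat.add_sub_cancel]
    · obtain ⟨c, hc, hcr⟩ := mem_image.1 h
      exact (hrow (liftCell c) (mem_map_of_mem _ hc)).2 hcr

lemma rookNum_succ_add_mul (hb : ∀ i, b (Fin.castSucc i) ≤ b (Fin.last n)) (k : ℕ) :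
    rookNum b (k + 1) + k * rookNum (b ∘ Fin.castSucc) k =
      rookNum (b ∘ Fin.castSucc) (k + 1) + b (Fin.last n) * rookNum (b ∘ Fin.castSucc) k := by
  have hfree : ∀ P' ∈ placements (b ∘ Fin.castSucc) k,
      (range (b (Fin.last n)) \ P'.image Prod.snd).card + k = b (Fin.last n) := by
    intro P' hP'
    obtain ⟨hP'b, rfl⟩ := mem_placements.1 hP'
    have hrows : P'.image Prod.snd ⊆ range (b (Fin.last n)) := fun r hr => by
      obtain ⟨c, hc, rfl⟩ := mem_image.1 hr
      exact mem_range.2 ((hP'b.1 c hc).trans_le (hb c.1))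
    rw [card_sdiff_of_subset hrows, card_range, ← hP'b.card_image_snd,
      Nat.sub_add_cancel (card_le_card hrows |>.trans_eq (card_range _))]
  have htotal := sum_const_nat hfree
  rw [sum_add_distrib, sum_const, smul_eq_mul] at htotal
  rw [rookNum_eq_card_placements b, ← card_filter_add_card_filter_not
    (p := fun P => ∀ c ∈ P, c.1 ≠ Fin.last n), card_placements_filter_not_mem_last,
    card_placements_filter_mem_last, rookNum_eq_card_placements (b ∘ Fin.castSucc) k]
  linarith

end LastColumn

section Factorization

variable {n : ℕ}

lemma descPochhammer_sub_succ {k : ℕ} (hk : k ≤ n) :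
    descPochhammer ℚ (n + 1 - k) = descPochhammer ℚ (n - k) * (X - C ((n : ℚ) - k)) := by
  rw [Nat.sub_add_comm hk, descPochhammer_succ_right, ← map_natCast C, Nat.cast_sub hk]

theorem sum_rookNum_smul_descPochhammer (b : Fin n → ℕ) (hb : Monotone b) :
    ∑ k ∈ range (n + 1), (rookNum b k : ℚ) • descPochhammer ℚ (n - k) =
      ∏ i, (X - C (rootVec b i : ℚ)) := by
  induction n with
  | zero => simp [rookNum_zero]
  | succ n ih =>
    set b' := b ∘ Fin.castSucc
    set h := b (Fin.last n)
    have hrec (k : ℕ) : (rookNum b (k + 1) : ℚ) = rookNum b' (k + 1) + (h - k) * rookNum b' k := by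
      have := congrArg (Nat.cast : ℕ → ℚ)
        (rookNum_succ_add_mul b (fun i => hb (Fin.castSucc_lt_last i).le) k)
      push_cast at this
      linarith
    have hshift : ∑ k ∈ range (n + 1), (rookNum b' k : ℚ) • descPochhammer ℚ (n + 1 - k) =
        ∑ k ∈ range (n + 1), (rookNum b' (k + 1) : ℚ) • descPochhammer ℚ (n - k) +
          descPochhammer ℚ (n + 1) := by
      rw [← add_zero (∑ k ∈ range (n + 1), _), ← zero_smul ℚ (descPochhammer ℚ (n + 1 - (n + 1))),
        ← Nat.cast_zero, ← rookNum_eq_zero_of_lt b' (lt_add_one n), ← sum_range_succ,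
        sum_range_succ']
      simp [rookNum_zero]
    have hterm : ∀ k ∈ range (n + 1),
        (rookNum b' k : ℚ) • descPochhammer ℚ (n - k) * (X - C (rootVec b (Fin.last n) : ℚ)) =
          (rookNum b' k : ℚ) • descPochhammer ℚ (n + 1 - k) +
            ((h - k) * rookNum b' k : ℚ) • descPochhammer ℚ (n - k) := by
      intro k hk
      rw [descPochhammer_sub_succ (Nat.lt_succ_iff.1 (mem_range.1 hk))]
      simp only [rootVec, Fin.val_last, Int.cast_sub, Int.cast_natCast, smul_eq_C_mul, map_sub,
        map_mul, map_natCast]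
      ring
    rw [Fin.prod_univ_castSucc]
    change _ = (∏ i, (X - C (rootVec b' i : ℚ))) * _
    rw [← ih b' (hb.comp Fin.strictMono_castSucc.monotone), sum_mul,
      sum_congr rfl hterm, sum_add_distrib, hshift, sum_range_succ']
    simp only [hrec, add_smul, sum_add_distrib, rookNum_zero, Nat.cast_one, one_smul,
      Nat.add_sub_add_right, Nat.sub_zero]
    ring

end Factorization

section RookEquivalence

variable {n : ℕ}

lemma linearIndependent_descPochhammer : LinearIndependent ℚ (descPochhammer ℚ) :=
  Polynomial.Sequence.linearIndependent ⟨descPochhammer ℚ, fun i => by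
    rw [degree_eq_natDegree (monic_descPochhammer ℚ i).ne_zero, descPochhammer_natDegree]⟩

theorem rookEquiv_of_rootVec_eq_comp_perm {b₁ b₂ : Fin n → ℕ} (hb₁ : Monotone b₁)
    (hb₂ : Monotone b₂) (σ : Equiv.Perm (Fin n)) (h : rootVec b₁ = rootVec b₂ ∘ σ) :
    RookEquiv b₁ b₂ := by
  have hsum : ∑ k ∈ range (n + 1),
      ((rookNum b₁ k : ℚ) - rookNum b₂ k) • descPochhammer ℚ (n - k) = 0 := by
    simp only [sub_smul, sum_sub_distrib, sum_rookNum_smul_descPochhammer b₁ hb₁,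
      sum_rookNum_smul_descPochhammer b₂ hb₂, h, Function.comp_apply,
      Equiv.prod_comp σ fun i => X - C (rootVec b₂ i : ℚ), sub_self]
  have hli : LinearIndependent ℚ fun k : Fin (n + 1) => descPochhammer ℚ (n - k) :=
    linearIndependent_descPochhammer.comp _ fun i j hij => Fin.ext (by omega)
  intro k
  rcases le_or_gt k n with hk | hk
  · rw [sum_range (fun k => ((rookNum b₁ k : ℚ) - rookNum b₂ k) • descPochhammer ℚ (n - k))]
      at hsum
    exact_mod_cast sub_eq_zero.1 (Fintype.linearIndependent_iff.1 hli _ hsum ⟨k, by omega⟩)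
  · rw [rookNum_eq_zero_of_lt b₁ hk, rookNum_eq_zero_of_lt b₂ hk]

end RookEquivalence

section FerrersRoots

variable {n : ℕ}

def boardOfRoots (y : Fin n → ℕ) : Fin n → ℕ := fun i => i - y i

/-- Non-negative root vectors of Ferrers boards, as `ℕ`-valued sequences: `y i ≤ i` makes the
column height `i - y i` honest, and `y (i + 1) ≤ y i + 1` makes the heights weakly increase. -/
def IsFerrersRoots (y : Fin n → ℕ) : Prop :=
  (∀ i, y i ≤ i) ∧ ∀ i j : Fin n, (j : ℕ) = i + 1 → y j ≤ y i + 1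

lemma IsFerrersRoots.monotone {y : Fin n → ℕ} (hy : IsFerrersRoots y) :
    Monotone (boardOfRoots y) := by
  rcases n with _ | n
  · exact fun i => i.elim0
  refine Fin.monotone_iff_le_succ.2 fun i => ?_
  have h₁ := hy.1 i.castSucc
  have h₂ := hy.2 i.castSucc i.succ (by simp)
  simp only [boardOfRoots, Fin.val_succ, Fin.val_castSucc] at h₁ h₂ ⊢
  omega

lemma IsFerrersRoots.rootVec_boardOfRoots {y : Fin n → ℕ} (hy : IsFerrersRoots y) (i : Fin n) :
    rootVec (boardOfRoots y) i = y i := by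
  have := hy.1 i
  simp only [rootVec, boardOfRoots]
  omega

lemma IsFerrersRoots.eq_of_le {y : Fin n → ℕ} (hy : IsFerrersRoots y) {j k : Fin n}
    (hk : y k = k) (hjk : j ≤ k) : y j = j := by
  obtain ⟨d, hd⟩ := Nat.exists_eq_add_of_le (Fin.le_def.1 hjk)
  induction d generalizing j with
  | zero => exact (Fin.ext hd.symm : j = k) ▸ hk
  | succ d ih =>
    have hj' : (j : ℕ) + 1 < n := by omega
    have h₁ : y ⟨j + 1, hj'⟩ = j + 1 :=
      ih (Fin.le_def.2 (show (j : ℕ) + 1 ≤ k by omega)) (show (k : ℕ) = j + 1 + d by omega)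
    have h₂ := hy.2 j ⟨j + 1, hj'⟩ rfl
    have h₃ := hy.1 j
    omega

lemma isFerrersRoots_of_board {b : Fin n → ℕ} (hb : Monotone b) (hroot : ∀ i, b i ≤ i) :
    IsFerrersRoots fun i => i - b i := by
  refine ⟨fun i => Nat.sub_le _ _, fun i j hij => ?_⟩
  have := hb (Fin.le_def.2 (by omega) : i ≤ j)
  have := hroot i
  show (j : ℕ) - b j ≤ i - b i + 1
  omega

lemma boardOfRoots_sub {b : Fin n → ℕ} (hroot : ∀ i, b i ≤ i) :
    boardOfRoots (fun i => i - b i) = b :=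
  funext fun i => Nat.sub_sub_self (hroot i)

end FerrersRoots

section RootMoves

variable {n : ℕ}

def SwapMove (y y' : Fin n → ℕ) : Prop :=
  ∃ p q, y p < y q ∧ y' = y ∘ Equiv.swap p q

def RootReach : (Fin n → ℕ) → (Fin n → ℕ) → Prop :=
  Relation.ReflTransGen fun y y' => SwapMove y y' ∧ IsFerrersRoots y'

lemma RootReach.isFerrersRoots {y y' : Fin n → ℕ} (h : RootReach y y') (hy : IsFerrersRoots y) :
    IsFerrersRoots y' := by
  induction h with
  | refl => exact hy
  | tail _ hstep _ => exact hstep.2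

lemma RootReach.exists_perm {y y' : Fin n → ℕ} (h : RootReach y y') :
    ∃ σ : Equiv.Perm (Fin n), y' = y ∘ σ := by
  induction h with
  | refl => exact ⟨1, rfl⟩
  | tail _ hstep ih =>
    obtain ⟨σ, rfl⟩ := ih
    obtain ⟨p, q, -, rfl⟩ := hstep.1
    exact ⟨σ * Equiv.swap p q, rfl⟩

lemma MovesSquares.ne {b₁ b₂ : Fin n → ℕ} (h : MovesSquares b₁ b₂) : b₁ ≠ b₂ := by
  obtain ⟨i, -, k, -, hk, hi, -⟩ := h
  exact fun h => by rw [h] at hi; omega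

lemma SwapMove.movesSquares {y y' : Fin n → ℕ} (h : SwapMove y y') (hy : IsFerrersRoots y)
    (hy' : IsFerrersRoots y') : MovesSquares (boardOfRoots y) (boardOfRoots y') := by
  obtain ⟨p, q, hlt, rfl⟩ := h
  have hpq : p ≠ q := fun h => (h ▸ hlt).false
  have hqp := hy'.1 p
  have hqq := hy.1 q
  simp only [Function.comp_apply, Equiv.swap_apply_left] at hqp
  refine ⟨p, q, y q - y p, hpq, by omega, ?_, ?_, fun l hlp hlq => ?_⟩
  · simp only [boardOfRoots, Function.comp_apply, Equiv.swap_apply_left]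
    omega
  · simp only [boardOfRoots, Function.comp_apply, Equiv.swap_apply_right]
    omega
  · simp only [boardOfRoots, Function.comp_apply, Equiv.swap_apply_of_ne_of_ne hlp hlq]

lemma SwapMove.rookEquiv {y y' : Fin n → ℕ} (h : SwapMove y y') (hy : IsFerrersRoots y)
    (hy' : IsFerrersRoots y') : RookEquiv (boardOfRoots y') (boardOfRoots y) := by
  obtain ⟨p, q, -, rfl⟩ := h
  refine rookEquiv_of_rootVec_eq_comp_perm hy'.monotone hy.monotone (Equiv.swap p q) ?_
  ext i
  simp [hy'.rootVec_boardOfRoots, hy.rootVec_boardOfRoots]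

def valueCount (y : Fin n → ℕ) (c : ℕ) : ℕ := #{i | y i = c}

lemma valueCount_comp_perm (y : Fin n → ℕ) (σ : Equiv.Perm (Fin n)) (c : ℕ) :
    valueCount (y ∘ σ) c = valueCount y c :=
  card_equiv σ (by simp)

end RootMoves

section Columns

variable {n : ℕ}

/-- In board terms, `prependColumn` adds an empty first column and `appendColumn` adds a last
column of full height `n`. -/
def prependColumn (w : Fin n → ℕ) : Fin (n + 1) → ℕ := Fin.cons 0 fun i => w i + 1

def appendColumn (w : Fin n → ℕ) : Fin (n + 1) → ℕ := Fin.snoc w 0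

@[simp] lemma prependColumn_zero (w : Fin n → ℕ) : prependColumn w 0 = 0 := rfl

@[simp] lemma prependColumn_succ (w : Fin n → ℕ) (i : Fin n) :
    prependColumn w i.succ = w i + 1 := rfl

@[simp] lemma appendColumn_castSucc (w : Fin n → ℕ) (i : Fin n) :
    appendColumn w i.castSucc = w i := Fin.snoc_castSucc ..

@[simp] lemma appendColumn_last (w : Fin n → ℕ) : appendColumn w (Fin.last n) = 0 :=
  Fin.snoc_last ..

lemma isFerrersRoots_prependColumn_iff {w : Fin n → ℕ} :
    IsFerrersRoots (prependColumn w) ↔ IsFerrersRoots w := by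
  simp only [IsFerrersRoots, Fin.forall_fin_succ, prependColumn_zero, prependColumn_succ,
    Fin.val_zero, Fin.val_succ]
  constructor
  · rintro ⟨⟨-, hle⟩, -, hadj⟩
    refine ⟨fun i => by have := hle i; omega, fun i j hij => ?_⟩
    have := (hadj i).2 j (by omega)
    omega
  · rintro ⟨hle, hadj⟩
    refine ⟨⟨le_rfl, fun i => by have := hle i; omega⟩, ⟨by simp, fun j hj => ?_⟩,
      fun i => ⟨by simp, fun j hij => by have := hadj i j (by omega); omega⟩⟩
    have := hle j
    omega

lemma isFerrersRoots_appendColumn_iff {w : Fin n → ℕ} :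
    IsFerrersRoots (appendColumn w) ↔ IsFerrersRoots w := by
  simp only [IsFerrersRoots, Fin.forall_fin_succ', appendColumn_castSucc, appendColumn_last,
    Fin.val_last, Fin.val_castSucc]
  constructor
  · rintro ⟨⟨hle, -⟩, hadj, -⟩
    exact ⟨hle, fun i j hij => (hadj i).1 j hij⟩
  · rintro ⟨hle, hadj⟩
    refine ⟨⟨hle, by simp⟩, fun i => ⟨hadj i, by simp⟩, ⟨fun j hj => ?_, by simp⟩⟩
    have := j.isLt
    omega

lemma prependColumn_comp_swap (w : Fin n → ℕ) (p q : Fin n) :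
    prependColumn (w ∘ Equiv.swap p q) = prependColumn w ∘ Equiv.swap p.succ q.succ := by
  ext i
  cases i using Fin.cases with
  | zero => simp [Equiv.swap_apply_of_ne_of_ne (Fin.succ_ne_zero p).symm (Fin.succ_ne_zero q).symm]
  | succ i => simp [(Fin.succ_injective n).swap_apply]

lemma appendColumn_comp_swap (w : Fin n → ℕ) (p q : Fin n) :
    appendColumn (w ∘ Equiv.swap p q) = appendColumn w ∘ Equiv.swap p.castSucc q.castSucc := by
  ext i
  cases i using Fin.lastCases with
  | last => simp [Equiv.swap_apply_of_ne_of_ne (Fin.castSucc_ne_last p).symm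
      (Fin.castSucc_ne_last q).symm]
  | cast i => simp [(Fin.castSucc_injective n).swap_apply]

lemma valueCount_prependColumn_succ (w : Fin n → ℕ) (c : ℕ) :
    valueCount (prependColumn w) (c + 1) = valueCount w c := by
  simp [valueCount, Fin.card_filter_univ_succ]

lemma valueCount_appendColumn {c : ℕ} (w : Fin n → ℕ) (hc : c ≠ 0) :
    valueCount (appendColumn w) c = valueCount w c := by
  rw [valueCount, valueCount, card_filter, card_filter, Fin.sum_univ_castSucc]
  simp [Ne.symm hc]

lemma RootReach.map {m : ℕ} {L : (Fin m → ℕ) → Fin n → ℕ} (σ : Fin m → Fin n)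
    (hL : ∀ w, IsFerrersRoots w → IsFerrersRoots (L w))
    (hswap : ∀ w p q, L (w ∘ Equiv.swap p q) = L w ∘ Equiv.swap (σ p) (σ q))
    (hlt : ∀ w p q, w p < w q → L w (σ p) < L w (σ q)) {w w' : Fin m → ℕ}
    (h : RootReach w w') : RootReach (L w) (L w') :=
  h.lift L fun _ _ ⟨⟨p, q, hpq, hw⟩, hvalid⟩ =>
    ⟨⟨σ p, σ q, hlt _ _ _ hpq, hw ▸ hswap _ p q⟩, hL _ hvalid⟩

lemma RootReach.prependColumn {w w' : Fin n → ℕ} (h : RootReach w w') :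
    RootReach (prependColumn w) (prependColumn w') :=
  h.map Fin.succ (fun _ => isFerrersRoots_prependColumn_iff.2) prependColumn_comp_swap
    fun _ _ _ hpq => by simpa using hpq

lemma RootReach.appendColumn {w w' : Fin n → ℕ} (h : RootReach w w') :
    RootReach (appendColumn w) (appendColumn w') :=
  h.map Fin.castSucc (fun _ => isFerrersRoots_appendColumn_iff.2) appendColumn_comp_swap
    fun _ _ _ hpq => by simpa using hpq

end Columns

section Parking

variable {n : ℕ}

lemma exists_down_crossing {y : Fin n → ℕ} {c : ℕ} {p p' : Fin n} (hpp' : p < p')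
    (hp : c ≤ y p) (hp' : y p' ≤ c) :
    ∃ i, p < i ∧ i ≤ p' ∧ y i ≤ c ∧ ∀ j : Fin n, (j : ℕ) + 1 = i → c ≤ y j := by
  classical
  set S := univ.filter fun i => p < i ∧ y i ≤ c
  have hp'S : p' ∈ S := by simp [S, hpp', hp']
  obtain ⟨hpi, hyi⟩ : p < S.min' ⟨p', hp'S⟩ ∧ y (S.min' _) ≤ c := by
    simpa [S] using S.min'_mem ⟨p', hp'S⟩
  refine ⟨_, hpi, S.min'_le _ hp'S, hyi, fun j hj => ?_⟩
  rcases (Fin.le_def.2 (by omega) : p ≤ j).eq_or_lt with rfl | hpj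
  · exact hp
  · by_contra hlt
    have := S.min'_le j (mem_filter.2 ⟨mem_univ j, hpj, by omega⟩)
    rw [Fin.le_def] at this
    omega

lemma IsFerrersRoots.exists_swap_last {y : Fin (n + 1) → ℕ} (hy : IsFerrersRoots y)
    (hpos : 0 < y (Fin.last n)) (hdup : 1 < valueCount y (y (Fin.last n) - 1)) :
    ∃ i, y i < y (Fin.last n) ∧ IsFerrersRoots (y ∘ Equiv.swap i (Fin.last n)) := by
  set e := y (Fin.last n)
  obtain ⟨p₁, hp₁, p₂, hp₂, hne⟩ := one_lt_card.1 hdup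
  simp only [mem_filter, mem_univ, true_and] at hp₁ hp₂
  obtain ⟨p, p', hpp', hp, hp'⟩ : ∃ p p', p < p' ∧ y p = e - 1 ∧ y p' = e - 1 := by
    rcases hne.lt_or_gt with h | h
    exacts [⟨p₁, p₂, h, hp₁, hp₂⟩, ⟨p₂, p₁, h, hp₂, hp₁⟩]
  -- the left neighbour of `i` has root at least `e - 1`, so column `i` can take the root `e`
  obtain ⟨i, hpi, hip', hyi, hpred⟩ := exists_down_crossing hpp' hp.ge hp'.le
  have hp'last : p' ≠ Fin.last n := fun h => by rw [h] at hp'; omega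
  have hi : (i : ℕ) < n := lt_of_le_of_lt hip' (Fin.val_lt_last hp'last)
  have hei : e ≤ i := by
    obtain ⟨j, hj⟩ : ∃ j : Fin (n + 1), (j : ℕ) + 1 = i :=
      ⟨⟨i - 1, by omega⟩, Nat.sub_add_cancel (Nat.one_le_of_lt hpi)⟩
    have := hy.1 j
    have := hpred j hj
    omega
  refine ⟨i, by omega, fun j => ?_, fun j k hjk => ?_⟩
  · have := hy.1 j
    have := hy.1 i
    simp only [Function.comp_apply, Equiv.swap_apply_def]
    split_ifs <;> subst_vars <;> (try simp only [Fin.val_last] at *) <;> omega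
  · have := hy.2 j k hjk
    have := hy.2 j (Fin.last n)
    have := hy.2 i k
    have := hpred j
    simp only [Function.comp_apply, Equiv.swap_apply_def]
    split_ifs <;> subst_vars <;> (try simp only [Fin.val_last] at *) <;> omega

lemma IsFerrersRoots.exists_rootReach_appendColumn {y : Fin (n + 1) → ℕ}
    (hy : IsFerrersRoots y) (hdup : ∀ c < y (Fin.last n), 1 < valueCount y c) :
    ∃ z, RootReach y (appendColumn z) := by
  induction he : y (Fin.last n) using Nat.strong_induction_on generalizing y with
  | _ e ih =>
  rcases Nat.eq_zero_or_pos e with rfl | hpos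
  · exact ⟨Fin.init y, by rw [appendColumn, ← he, Fin.snoc_init_self]; exact .refl⟩
  subst he
  obtain ⟨i, hi, hy'⟩ := hy.exists_swap_last hpos (hdup _ (by omega))
  have hlast : (y ∘ Equiv.swap i (Fin.last n)) (Fin.last n) = y i := by simp
  obtain ⟨z, hreach⟩ := ih _ hi hy' (fun c hc => by
    rw [valueCount_comp_perm]
    exact hdup c (by omega)) hlast
  exact ⟨z, .head ⟨⟨i, _, hi, rfl⟩, hy'⟩ hreach⟩

end Parking

lemma IsFerrersRoots.eq_prependColumn {n : ℕ} {y : Fin (n + 1) → ℕ} (hy : IsFerrersRoots y)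
    (hzero : valueCount y 0 ≤ 1) : ∃ z, prependColumn z = y := by
  have hy0 : y 0 = 0 := Nat.le_zero.1 (hy.1 0)
  have hsucc (j : Fin n) : y j.succ ≠ 0 := fun hj => by
    have : 1 < valueCount y 0 :=
      one_lt_card.2 ⟨0, by simp [hy0], j.succ, by simp [hj], (Fin.succ_ne_zero j).symm⟩
    omega
  refine ⟨fun j => y j.succ - 1, funext fun i => ?_⟩
  cases i using Fin.cases with
  | zero => exact hy0.symm
  | succ j => exact Nat.sub_add_cancel (Nat.one_le_iff_ne_zero.2 (hsucc j))

theorem IsFerrersRoots.exists_rootReach_eq {n : ℕ} {y : Fin n → ℕ} (hy : IsFerrersRoots y)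
    {M : ℕ} {m : Fin n} (hm : y m = M) (hle : ∀ i, y i ≤ M)
    (hcond : ∀ c, c + 1 < M → 1 < valueCount y c → 1 < valueCount y (c + 1)) :
    ∃ y', RootReach y y' ∧ ∃ k : Fin n, (k : ℕ) = M ∧ y' k = M := by
  induction n generalizing M with
  | zero => exact m.elim0
  | succ n ih =>
  rcases Nat.eq_zero_or_pos M with rfl | hM
  · exact ⟨y, .refl, 0, rfl, Nat.le_zero.1 (hy.1 0)⟩
  by_cases hzero : valueCount y 0 ≤ 1
  · obtain ⟨z, rfl⟩ := hy.eq_prependColumn hzero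
    cases m using Fin.cases with
    | zero => exact absurd hm hM.ne
    | succ j =>
    simp only [prependColumn_succ] at hm
    obtain ⟨z', hreach, k, hk, hz'k⟩ := ih (isFerrersRoots_prependColumn_iff.1 hy)
      (M := M - 1) (m := j) (by omega) (fun i => Nat.le_sub_one_of_lt (hle i.succ))
      (fun c hc hdup => by
        rw [← valueCount_prependColumn_succ] at hdup ⊢
        exact hcond (c + 1) (by omega) hdup)
    exact ⟨_, hreach.prependColumn, k.succ, by rw [Fin.val_succ, hk]; omega,
      by rw [prependColumn_succ, hz'k]; omega⟩
  · have hdup (c : ℕ) (hc : c < M) : 1 < valueCount y c := by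
      induction c with
      | zero => omega
      | succ c ihc => exact hcond c hc (ihc (by omega))
    obtain ⟨z, hreach₂⟩ := hy.exists_rootReach_appendColumn fun c hc =>
      hdup c (hc.trans_le (hle _))
    obtain ⟨σ, hz⟩ := hreach₂.exists_perm
    have hσm : σ.symm m ≠ Fin.last n := fun h => by
      have := congrFun hz (σ.symm m)
      rw [Function.comp_apply, Equiv.apply_symm_apply, h, appendColumn_last] at this
      omega
    obtain ⟨j, hj⟩ := Fin.exists_castSucc_eq.2 hσm
    obtain ⟨z', hreach, k, hk, hz'k⟩ :=
      ih (isFerrersRoots_appendColumn_iff.1 (hreach₂.isFerrersRoots hy)) (M := M) (m := j)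
        (by rw [← appendColumn_castSucc z, hz, hj]; simpa using hm)
        (fun i => by rw [← appendColumn_castSucc z, hz]; exact hle _)
        (fun c hc _ => by
          rw [← valueCount_appendColumn z (Nat.succ_ne_zero c), hz, valueCount_comp_perm]
          exact hdup (c + 1) hc)
    exact ⟨_, hreach₂.trans hreach.appendColumn, k.castSucc, hk, by simpa using hz'k⟩

lemma RootReach.exists_reachable {n : ℕ} {B : FerrersBoard n} {y y' : Fin n → ℕ}
    (hy : IsFerrersRoots y) (hB : boardOfRoots y = B.1) (h : RootReach y y') :
    ∃ C : {C : FerrersBoard n // RookEquiv C.1 B.1},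
      (rookEquivGraph B).Reachable ⟨B, fun _ => rfl⟩ C ∧ C.1.1 = boardOfRoots y' := by
  induction h with
  | refl => exact ⟨_, .rfl, hB.symm⟩
  | @tail w w' hreach hstep ih =>
    obtain ⟨C, hC, hCw⟩ := ih
    have hw := RootReach.isFerrersRoots hreach hy
    have hmove := hstep.1.movesSquares hw hstep.2
    let D : {C : FerrersBoard n // RookEquiv C.1 B.1} :=
      ⟨⟨boardOfRoots w', hstep.2.monotone⟩, fun k => by
        rw [hstep.1.rookEquiv hw hstep.2 k, ← hCw]
        exact C.2 k⟩
    have hadj : (rookEquivGraph B).Adj C D := by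
      rw [rookEquivGraph, SimpleGraph.fromRel_adj]
      refine ⟨fun hCD => hmove.ne ?_, .inl (hCw ▸ hmove)⟩
      rw [← hCw, hCD]
    exact ⟨D, hC.trans hadj.reachable, rfl⟩

/-- if `v_i > 1` implies `v_{i+1} > 1` for all `0 ≤ i < M - 1`, then
`B` is connected by a path in its rook equivalence graph to a board `B'` whose
root vector has first `M + 1` entries `0, 1, …, M` (0-indexed: entry `i` equals
`i` for all `i ≤ M`). -/
theorem stmt3 {n : ℕ} (B : FerrersBoard n)
    (hpos : ∀ i, 0 ≤ rootVec B.1 i)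
    (M : ℕ) (hM : entryCount B.1 M ≠ 0)
    (hMmax : ∀ k, entryCount B.1 k ≠ 0 → k ≤ M)
    (hcond : ∀ i : ℕ, i + 1 < M → 1 < entryCount B.1 i → 1 < entryCount B.1 (i + 1)) :
    ∃ B' : {C : FerrersBoard n // RookEquiv C.1 B.1},
      (rookEquivGraph B).Reachable ⟨B, fun _ => rfl⟩ B' ∧
      ∀ i : Fin n, (i : ℕ) ≤ M → rootVec B'.1.1 i = ((i : ℕ) : ℤ) := by
  have hroot (i : Fin n) : B.1 i ≤ i := by
    have := hpos i
    simp only [rootVec] at this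
    omega
  set y : Fin n → ℕ := fun i => i - B.1 i
  have hy : IsFerrersRoots y := isFerrersRoots_of_board B.2 hroot
  have hcount (c : ℕ) : valueCount y c = entryCount B.1 c := by
    refine congrArg card (filter_congr fun i _ => ?_)
    have := hroot i
    simp only [y, rootVec]
    omega
  obtain ⟨m, hm⟩ : ∃ m, y m = M := by
    obtain ⟨m, hm⟩ := card_pos.1 (Nat.pos_of_ne_zero ((hcount M).symm ▸ hM))
    exact ⟨m, (mem_filter.1 hm).2⟩
  have hle (i : Fin n) : y i ≤ M :=
    hMmax _ (hcount (y i) ▸ card_ne_zero_of_mem (mem_filter.2 ⟨mem_univ i, rfl⟩))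
  obtain ⟨y', hreach, k, hk, hy'k⟩ := hy.exists_rootReach_eq hm hle (by simpa only [hcount])
  obtain ⟨C, hC, hCy'⟩ := hreach.exists_reachable hy (boardOfRoots_sub hroot)
  have hy' := hreach.isFerrersRoots hy
  refine ⟨C, hC, fun i hi => ?_⟩
  rw [hCy', hy'.rootVec_boardOfRoots, hy'.eq_of_le (hy'k.trans hk.symm) (Fin.le_def.2 (hk ▸ hi))]
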